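/- arXiv:math/0410451 — 3 statements merged into one kernel-verified Lean document; each statement's English description precedes it below -/
import Mathlib

section
/- Let a > 0 and ε > 0. For every x ∈ ℝ³, the integral over y ∈ ℝ³ (with respect to Lebesgue measure) of exp(−(a/ε)‖x−y‖)/(4π ε² ‖x−y‖) equals 1/a². -/
open MeasureTheory Real Set

/-! After translating `x` to the origin, spherical coordinates turn the integral into
`ε⁻² ∫₀^∞ r e^{-(a/ε) r} dr`: the area element `4πr² dr` absorbs both the singularity `1/r` and
the factor `4π`. The remaining Gamma integral is `∫₀^∞ r e^{-cr} dr = 1/c²`. -/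

theorem integral_pow_mul_exp_neg_mul_Ioi {c : ℝ} (hc : 0 < c) (n : ℕ) :
    ∫ r in Ioi (0 : ℝ), r ^ n * exp (-(c * r)) = n.factorial / c ^ (n + 1) := by
  have h := integral_rpow_mul_exp_neg_mul_Ioi (a := n + 1) (by positivity) hc
  rw [add_sub_cancel_right, Gamma_nat_eq_factorial, ← Nat.cast_add_one, rpow_natCast,
    one_div_pow] at h
  simp_rw [rpow_natCast] at h
  rw [h, one_div_mul_eq_div]

theorem integral_fun_norm_euclideanSpace_fin_three {F : Type*} [NormedAddCommGroup F]
    [NormedSpace ℝ F] (f : ℝ → F) :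
    ∫ y : EuclideanSpace ℝ (Fin 3), f ‖y‖ = (4 * π) • ∫ r in Ioi (0 : ℝ), r ^ 2 • f r := by
  rw [integral_fun_norm_addHaar volume f, finrank_euclideanSpace_fin, measureReal_def,
    EuclideanSpace.volume_ball_fin_three, ← Nat.cast_smul_eq_nsmul ℝ, smul_smul]
  congr 1
  rw [ENNReal.toReal_mul, ENNReal.toReal_pow, ENNReal.toReal_ofReal zero_le_one,
    ENNReal.toReal_ofReal (by positivity)]
  ring

/-- For `a > 0`, `ε > 0` and any `x ∈ ℝ³`, the integral of the Green's function
`exp(-(a/ε)‖x-y‖)/(4πε²‖x-y‖)` over `y ∈ ℝ³` (Lebesgue measure) equals `1/a²`. -/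
theorem green_function_integral (a ε : ℝ) (ha : 0 < a) (hε : 0 < ε)
    (x : EuclideanSpace ℝ (Fin 3)) :
    ∫ y : EuclideanSpace ℝ (Fin 3),
        Real.exp (-(a / ε) * ‖x - y‖) / (4 * Real.pi * ε ^ 2 * ‖x - y‖) = 1 / a ^ 2 := by
  set g : ℝ → ℝ := fun r ↦ exp (-(a / ε) * r) / (4 * π * ε ^ 2 * r)
  have hradial : ∫ r in Ioi (0 : ℝ), r ^ 2 • g r
      = (4 * π * ε ^ 2)⁻¹ * ∫ r in Ioi (0 : ℝ), r ^ 1 * exp (-(a / ε * r)) := by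
    rw [← integral_const_mul]
    refine setIntegral_congr_fun measurableSet_Ioi fun r (hr : 0 < r) ↦ ?_
    simp only [g, smul_eq_mul, neg_mul]
    field_simp
  calc ∫ y : EuclideanSpace ℝ (Fin 3), g ‖x - y‖
      = ∫ y : EuclideanSpace ℝ (Fin 3), g ‖y‖ := integral_sub_left_eq_self (g ‖·‖) volume x
    _ = (4 * π) * ((4 * π * ε ^ 2)⁻¹ * (1 / (a / ε) ^ 2)) := by
      rw [integral_fun_norm_euclideanSpace_fin_three, hradial,
        integral_pow_mul_exp_neg_mul_Ioi (div_pos ha hε)]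
      simp
    _ = 1 / a ^ 2 := by
      field_simp [pi_pos.ne']
end

section
/- Let a > 0, ε > 0, let p : ℝ³ → ℝ be bounded, continuous and nonnegative, and let f : ℝ → ℝ be continuously differentiable. Fix R > 0 and set M₁(R) = sup of |f'(t)| over |t| ≤ 2R. Assume (‖p‖∞ + M₁(R))/a² ≤ γ for some γ with 0 < γ < 1. Then for all bounded continuous v, w : ℝ³ → ℝ with ‖v‖∞ ≤ R and ‖w‖∞ ≤ R, one has ‖T(v) − T(w)‖∞ ≤ γ ‖v − w‖∞, where T(v)(x) = ∫_{ℝ³} g_{a,ε}(x,y)(−p(y)v(y) + f(v(y))) dy. -/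
/-!
`T(v) - T(w)` is the convolution of the nonnegative kernel `g_{a,ε}` with the difference of the
reaction terms `-p v + f(v)`, and that difference is pointwise at most
`(‖p‖∞ + M₁(R)) ‖v - w‖∞`: for the nonlinear part by the mean value theorem, as `v y` and `w y`
lie in `[-2R, 2R]`. Integrating against `g_{a,ε}(x, ·)`, whose total mass is
`∫₀^∞ 4πr² e^{-ar/ε} / (4πε²r) dr = 1/a²`, gives the factor `(‖p‖∞ + M₁(R)) / a² ≤ γ`.
-/

open MeasureTheory Real Set
open scoped BoundedContinuousFunction

/-- `g_{a,ε}(x, y) = screenedPoissonKernel a ε (x - y)`. -/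
noncomputable def screenedPoissonKernel (a ε : ℝ) (z : EuclideanSpace ℝ (Fin 3)) : ℝ :=
  exp (-(a / ε) * ‖z‖) / (4 * π * ε ^ 2 * ‖z‖)

lemma integral_mul_exp_neg_mul_Ioi {c : ℝ} (hc : 0 < c) :
    ∫ t in Ioi (0 : ℝ), t * exp (-(c * t)) = 1 / c ^ 2 := by
  have h := integral_rpow_mul_exp_neg_mul_Ioi (a := 2) two_pos hc
  norm_num [Gamma_two] at h
  rw [h, one_div]

lemma screenedPoissonKernel_nonneg (a ε : ℝ) (z : EuclideanSpace ℝ (Fin 3)) :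
    0 ≤ screenedPoissonKernel a ε z :=
  div_nonneg (exp_nonneg _) (by positivity)

lemma integral_screenedPoissonKernel {a ε : ℝ} (ha : 0 < a) (hε : 0 < ε) :
    ∫ z, screenedPoissonKernel a ε z = 1 / a ^ 2 := by
  have hradial := integral_fun_norm_addHaar (volume : Measure (EuclideanSpace ℝ (Fin 3)))
    fun r => exp (-(a / ε) * r) / (4 * π * ε ^ 2 * r)
  simp only [finrank_euclideanSpace_fin] at hradial
  have hintegrand : ∀ r ∈ Ioi (0 : ℝ), r ^ (3 - 1) • (exp (-(a / ε) * r) / (4 * π * ε ^ 2 * r))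
      = (4 * π * ε ^ 2)⁻¹ * (r * exp (-((a / ε) * r))) := by
    intro r hr
    have : r ≠ 0 := (mem_Ioi.mp hr).ne'
    simp only [smul_eq_mul, neg_mul]
    field_simp
  unfold screenedPoissonKernel
  rw [hradial, setIntegral_congr_fun measurableSet_Ioi hintegrand, integral_const_mul,
    integral_mul_exp_neg_mul_Ioi (by positivity), measureReal_def,
    EuclideanSpace.volume_ball_fin_three, ENNReal.ofReal_one, one_pow, one_mul,
    ENNReal.toReal_ofReal (by positivity)]
  simp only [nsmul_eq_mul, smul_eq_mul, Nat.cast_ofNat]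
  field_simp

lemma integrable_screenedPoissonKernel {a ε : ℝ} (ha : 0 < a) (hε : 0 < ε) :
    Integrable (screenedPoissonKernel a ε) :=
  Integrable.of_integral_ne_zero <| by
    rw [integral_screenedPoissonKernel ha hε]
    positivity

lemma abs_sub_le_sSup_abs_deriv_mul {f : ℝ → ℝ} (hf : ContDiff ℝ 1 f) {a b s t : ℝ}
    (hs : s ∈ Icc a b) (ht : t ∈ Icc a b) :
    |f s - f t| ≤ sSup ((fun u => |deriv f u|) '' Icc a b) * |s - t| := by
  have hbdd : BddAbove ((fun u => |deriv f u|) '' Icc a b) :=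
    (isCompact_Icc.image (hf.continuous_deriv le_rfl).abs).bddAbove
  simpa only [Real.norm_eq_abs] using Convex.norm_image_sub_le_of_norm_deriv_le
    (fun u _ => (hf.differentiable one_ne_zero).differentiableAt)
    (fun u hu => le_csSup hbdd (mem_image_of_mem _ hu)) (convex_Icc a b) ht hs

section ReactionTerm

variable {α : Type*} [TopologicalSpace α]

def reactionTerm (p : α →ᵇ ℝ) (f : ℝ → ℝ) (u : α →ᵇ ℝ) (y : α) : ℝ :=
  -(p y) * u y + f (u y)

lemma continuous_reactionTerm (p : α →ᵇ ℝ) {f : ℝ → ℝ} (hf : Continuous f) (u : α →ᵇ ℝ) :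
    Continuous (reactionTerm p f u) :=
  (p.continuous.neg.mul u.continuous).add (hf.comp u.continuous)

lemma exists_forall_abs_reactionTerm_le (p : α →ᵇ ℝ) {f : ℝ → ℝ} (hf : Continuous f)
    (u : α →ᵇ ℝ) : ∃ C, ∀ y, |reactionTerm p f u y| ≤ C := by
  obtain ⟨C, hC⟩ := (isCompact_Icc (a := -‖u‖) (b := ‖u‖)).exists_bound_of_continuousOn
    hf.continuousOn
  refine ⟨‖p‖ * ‖u‖ + C, fun y => ?_⟩
  have hp : |p y| ≤ ‖p‖ := p.norm_coe_le_norm y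
  have hu : |u y| ≤ ‖u‖ := u.norm_coe_le_norm y
  calc |reactionTerm p f u y| ≤ |p y| * |u y| + |f (u y)| := by
        simpa only [reactionTerm, abs_mul, abs_neg] using abs_add_le (-(p y) * u y) (f (u y))
    _ ≤ ‖p‖ * ‖u‖ + C := by
        gcongr
        exact hC _ (abs_le.mp hu)

lemma abs_reactionTerm_sub_le (p : α →ᵇ ℝ) {f : ℝ → ℝ} (hf : ContDiff ℝ 1 f) {R : ℝ}
    {v w : α →ᵇ ℝ} (hv : ‖v‖ ≤ R) (hw : ‖w‖ ≤ R) (y : α) :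
    |reactionTerm p f v y - reactionTerm p f w y|
      ≤ (‖p‖ + sSup ((fun t => |deriv f t|) '' Icc (-(2 * R)) (2 * R))) * ‖v - w‖ := by
  have hmem : ∀ u : α →ᵇ ℝ, ‖u‖ ≤ R → u y ∈ Icc (-(2 * R)) (2 * R) := fun u hu => by
    have := abs_le.mp ((u.norm_coe_le_norm y).trans hu)
    constructor <;> linarith [norm_nonneg u]
  have hp : |p y| ≤ ‖p‖ := p.norm_coe_le_norm y
  have hvw : |v y - w y| ≤ ‖v - w‖ := (v - w).norm_coe_le_norm y
  have hM : 0 ≤ sSup ((fun t => |deriv f t|) '' Icc (-(2 * R)) (2 * R)) :=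
    Real.sSup_nonneg (by rintro _ ⟨t, -, rfl⟩; exact abs_nonneg _)
  calc |reactionTerm p f v y - reactionTerm p f w y|
      = |-(p y) * (v y - w y) + (f (v y) - f (w y))| := by unfold reactionTerm; ring_nf
    _ ≤ |p y| * |v y - w y| + |f (v y) - f (w y)| := by
        simpa only [abs_mul, abs_neg] using abs_add_le (-(p y) * (v y - w y)) (f (v y) - f (w y))
    _ ≤ (‖p‖ + sSup ((fun t => |deriv f t|) '' Icc (-(2 * R)) (2 * R))) * |v y - w y| := by
        rw [add_mul]
        gcongr
        exact abs_sub_le_sSup_abs_deriv_mul hf (hmem v hv) (hmem w hw)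
    _ ≤ _ := by gcongr

end ReactionTerm

lemma abs_integral_mul_sub_integral_mul_le {α : Type*} [MeasurableSpace α] {μ : Measure α}
    {G F₁ F₂ : α → ℝ} {C₁ C₂ L : ℝ} (hG : Integrable G μ) (hG0 : ∀ y, 0 ≤ G y)
    (hF₁ : AEStronglyMeasurable F₁ μ) (hF₂ : AEStronglyMeasurable F₂ μ)
    (hC₁ : ∀ y, |F₁ y| ≤ C₁) (hC₂ : ∀ y, |F₂ y| ≤ C₂) (hL : ∀ y, |F₁ y - F₂ y| ≤ L) :
    |∫ y, G y * F₁ y ∂μ - ∫ y, G y * F₂ y ∂μ| ≤ (∫ y, G y ∂μ) * L := by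
  rw [← integral_sub (hG.mul_bdd hF₁ (.of_forall hC₁)) (hG.mul_bdd hF₂ (.of_forall hC₂)),
    ← integral_mul_const, ← Real.norm_eq_abs]
  refine norm_integral_le_of_norm_le (hG.mul_const L) (.of_forall fun y => ?_)
  rw [← mul_sub, norm_mul, Real.norm_of_nonneg (hG0 y)]
  exact mul_le_mul_of_nonneg_left (hL y) (hG0 y)

theorem T_is_contraction_general (a ε R γ : ℝ) (ha : 0 < a) (hε : 0 < ε)
    (p : BoundedContinuousFunction (EuclideanSpace ℝ (Fin 3)) ℝ)
    (f : ℝ → ℝ) (hf : ContDiff ℝ 1 f)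
    (M₁ : ℝ) (hM₁ : M₁ = sSup ((fun t => |deriv f t|) '' Set.Icc (-(2 * R)) (2 * R)))
    (hcond : (‖p‖ + M₁) / a ^ 2 ≤ γ)
    (v w : BoundedContinuousFunction (EuclideanSpace ℝ (Fin 3)) ℝ)
    (hv : ‖v‖ ≤ R) (hw : ‖w‖ ≤ R) :
    ∀ x : EuclideanSpace ℝ (Fin 3),
      |(∫ y : EuclideanSpace ℝ (Fin 3),
            Real.exp (-(a / ε) * ‖x - y‖) / (4 * Real.pi * ε ^ 2 * ‖x - y‖) *
              (-(p y) * v y + f (v y))) -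
          ∫ y : EuclideanSpace ℝ (Fin 3),
            Real.exp (-(a / ε) * ‖x - y‖) / (4 * Real.pi * ε ^ 2 * ‖x - y‖) *
              (-(p y) * w y + f (w y))| ≤ γ * ‖v - w‖ := by
  intro x
  obtain ⟨Cv, hCv⟩ := exists_forall_abs_reactionTerm_le p hf.continuous v
  obtain ⟨Cw, hCw⟩ := exists_forall_abs_reactionTerm_le p hf.continuous w
  calc _ ≤ (∫ y, screenedPoissonKernel a ε (x - y)) * ((‖p‖ + M₁) * ‖v - w‖) :=
        abs_integral_mul_sub_integral_mul_le
          ((integrable_screenedPoissonKernel ha hε).comp_sub_left x)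
          (fun y => screenedPoissonKernel_nonneg a ε (x - y))
          (continuous_reactionTerm p hf.continuous v).aestronglyMeasurable
          (continuous_reactionTerm p hf.continuous w).aestronglyMeasurable
          hCv hCw (hM₁ ▸ abs_reactionTerm_sub_le p hf hv hw)
    _ = (‖p‖ + M₁) / a ^ 2 * ‖v - w‖ := by
        rw [integral_sub_left_eq_self (screenedPoissonKernel a ε),
          integral_screenedPoissonKernel ha hε]
        ring
    _ ≤ γ * ‖v - w‖ := by gcongr

/-- If `(‖p‖∞ + M₁(R))/a² ≤ γ < 1` then
`T(v)(x) = ∫ g_{a,ε}(x,y)(-p(y)v(y) + f(v(y))) dy` is a `γ`-contraction on the ball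
of radius `R` of bounded continuous functions (sup-norm). -/
theorem T_is_contraction (a ε R γ : ℝ) (ha : 0 < a) (hε : 0 < ε) (hR : 0 < R)
    (hγ0 : 0 < γ) (hγ1 : γ < 1)
    (p : BoundedContinuousFunction (EuclideanSpace ℝ (Fin 3)) ℝ) (hp : ∀ x, 0 ≤ p x)
    (f : ℝ → ℝ) (hf : ContDiff ℝ 1 f)
    (M₁ : ℝ) (hM₁ : M₁ = sSup ((fun t => |deriv f t|) '' Set.Icc (-(2 * R)) (2 * R)))
    (hcond : (‖p‖ + M₁) / a ^ 2 ≤ γ)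
    (v w : BoundedContinuousFunction (EuclideanSpace ℝ (Fin 3)) ℝ)
    (hv : ‖v‖ ≤ R) (hw : ‖w‖ ≤ R) :
    ∀ x : EuclideanSpace ℝ (Fin 3),
      |(∫ y : EuclideanSpace ℝ (Fin 3),
            Real.exp (-(a / ε) * ‖x - y‖) / (4 * Real.pi * ε ^ 2 * ‖x - y‖) *
              (-(p y) * v y + f (v y))) -
          ∫ y : EuclideanSpace ℝ (Fin 3),
            Real.exp (-(a / ε) * ‖x - y‖) / (4 * Real.pi * ε ^ 2 * ‖x - y‖) *
              (-(p y) * w y + f (w y))| ≤ γ * ‖v - w‖ :=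
  T_is_contraction_general a ε R γ ha hε p f hf M₁ hM₁ hcond v w hv hw
end

section
/- (Solvability of the limiting equation (1.3).) Let a > 0, let q : ℝ³ → ℝ be continuous with q(x) ≥ a² for all x, put p = q − a², and assume p is bounded. Let f : ℝ → ℝ be continuously differentiable. Fix R > 0, set M(R) = sup_{|t|≤R} |f(t)| and M₁(R) = sup_{|t|≤2R} |f'(t)|, and assume (‖p‖∞ · R + M(R))/a² ≤ R and (‖p‖∞ + M₁(R))/a² ≤ γ for some γ with 0 < γ < 1. Then there exists a unique continuous function u : ℝ³ → ℝ with |u(x)| ≤ R for all x satisfying q(x) u(x) = f(u(x)) for all x ∈ ℝ³. -/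
/-!
For each `x`, a bounded solution value `u x` must be a fixed point of
`t ↦ (f t - p x * t) / a²` on `[-R, R]`. The first smallness condition makes this map send
`[-R, R]` into itself, and the second, via the mean value theorem, makes it a contraction, so
Banach's theorem gives exactly one solution value. It depends on `x` only through `p x`, and
Lipschitz continuously so, because the maps move by at most `R / a²` per unit change of the
parameter; hence `u` is continuous.
-/

open Set NNReal

theorem ContractingWith.of_dist_le_mul {α : Type*} [MetricSpace α] {κ : ℝ} {g : α → α}
    (hκ : κ < 1) (hg : ∀ x y, dist (g x) (g y) ≤ κ * dist x y) :
    ContractingWith κ.toNNReal g :=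
  ⟨Real.toNNReal_lt_one.2 hκ, LipschitzWith.of_dist_le_mul fun x y =>
    (hg x y).trans (by gcongr; exact Real.le_coe_toNNReal κ)⟩

theorem ContractingWith.lipschitzWith_fixedPoint {P α : Type*} [PseudoMetricSpace P]
    [MetricSpace α] [Nonempty α] [CompleteSpace α] {K L : ℝ≥0} {F : P → α → α}
    (hF : ∀ s, ContractingWith K (F s)) (hL : ∀ t, LipschitzWith L fun s => F s t) :
    LipschitzWith (L / (1 - K)) fun s => fixedPoint (F s) (hF s) := by
  refine LipschitzWith.of_dist_le_mul fun s s' => ?_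
  have hK : (K : ℝ) ≤ 1 := (hF s).1.le
  calc dist (fixedPoint (F s) (hF s)) (fixedPoint (F s') (hF s'))
      ≤ L * dist s s' / (1 - K) :=
        (hF s).fixedPoint_lipschitz_in_map (hF s') fun t => (hL t).dist_le_mul s s'
    _ = ↑(L / (1 - K)) * dist s s' := by
        rw [NNReal.coe_div, NNReal.coe_sub (by exact_mod_cast hK)]; push_cast; ring

theorem abs_le_sSup_image_abs {α : Type*} [TopologicalSpace α] {g : α → ℝ} {s : Set α}
    (hs : IsCompact s) (hg : ContinuousOn g s) {t : α} (ht : t ∈ s) :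
    |g t| ≤ sSup ((fun t => |g t|) '' s) :=
  le_csSup (hs.bddAbove_image hg.abs) (mem_image_of_mem _ ht)

/-- The equation `(s + c) t = f t` rewritten as the fixed-point problem `t = (f t - s t) / c`. -/
noncomputable def limitingMap (f : ℝ → ℝ) (c s t : ℝ) : ℝ := (f t - s * t) / c

section limitingMap

variable {f : ℝ → ℝ} {c s t P R : ℝ}

theorem limitingMap_eq_self_iff (hc : c ≠ 0) : limitingMap f c s t = t ↔ (s + c) * t = f t := by
  rw [limitingMap, div_eq_iff hc]
  constructor <;> intro h <;> linarith

theorem mapsTo_limitingMap {M : ℝ} (hc : 0 < c) (hs : |s| ≤ P)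
    (hM : ∀ t ∈ Icc (-R) R, |f t| ≤ M) (hPRM : (P * R + M) / c ≤ R) :
    MapsTo (limitingMap f c s) (Icc (-R) R) (Icc (-R) R) := by
  intro t ht
  have hst : |s * t| ≤ P * R := by
    rw [abs_mul]
    exact mul_le_mul hs (abs_le.2 ht) (abs_nonneg t) ((abs_nonneg s).trans hs)
  rw [mem_Icc, ← abs_le, limitingMap, abs_div, abs_of_pos hc]
  calc |f t - s * t| / c ≤ (P * R + M) / c := by
        gcongr
        linarith [abs_sub (f t) (s * t), hM t ht]
    _ ≤ R := hPRM

theorem abs_limitingMap_sub_le {L : ℝ} (hc : 0 < c) (hs : |s| ≤ P)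
    {t t' : ℝ} (hL : |f t - f t'| ≤ L * |t - t'|) :
    |limitingMap f c s t - limitingMap f c s t'| ≤ (P + L) / c * |t - t'| := by
  have hdiff : limitingMap f c s t - limitingMap f c s t' = (f t - f t' - s * (t - t')) / c := by
    unfold limitingMap; ring
  rw [hdiff, abs_div, abs_of_pos hc, div_mul_eq_mul_div]
  gcongr
  calc |f t - f t' - s * (t - t')| ≤ |f t - f t'| + |s| * |t - t'| := by
        rw [← abs_mul]; exact abs_sub _ _
    _ ≤ L * |t - t'| + P * |t - t'| := by gcongr
    _ = (P + L) * |t - t'| := by ring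

theorem abs_limitingMap_sub_limitingMap_le (hc : 0 < c) {s' : ℝ} (ht : |t| ≤ R) :
    |limitingMap f c s t - limitingMap f c s' t| ≤ R / c * |s - s'| := by
  have hdiff : limitingMap f c s t - limitingMap f c s' t = (s' - s) * t / c := by
    unfold limitingMap; ring
  rw [hdiff, abs_div, abs_of_pos hc, abs_mul, abs_sub_comm, div_mul_eq_mul_div, mul_comm R]
  gcongr

theorem exists_continuous_solution_Icc {M L : ℝ} (hc : 0 < c) (hR : 0 ≤ R)
    (hM : ∀ t ∈ Icc (-R) R, |f t| ≤ M)
    (hL : ∀ t ∈ Icc (-R) R, ∀ t' ∈ Icc (-R) R, |f t - f t'| ≤ L * |t - t'|)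
    (hPRM : (P * R + M) / c ≤ R) (hPL : (P + L) / c < 1) :
    ∃ φ : Icc (-P) P → Icc (-R) R, Continuous φ ∧
      ∀ (s : Icc (-P) P) (t : Icc (-R) R), ((s : ℝ) + c) * t = f t ↔ t = φ s := by
  have : Nonempty (Icc (-R) R) := ⟨⟨0, by simpa using hR⟩⟩
  have : CompleteSpace (Icc (-R) R) := isClosed_Icc.completeSpace_coe
  let T (s : Icc (-P) P) : Icc (-R) R → Icc (-R) R :=
    (mapsTo_limitingMap hc (abs_le.2 s.2) hM hPRM).restrict
  have hT (s : Icc (-P) P) : ContractingWith ((P + L) / c).toNNReal (T s) :=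
    .of_dist_le_mul hPL fun t t' => abs_limitingMap_sub_le hc (abs_le.2 s.2) (hL t t.2 t' t'.2)
  have hTs (t : Icc (-R) R) : LipschitzWith (R / c).toNNReal fun s => T s t :=
    LipschitzWith.of_dist_le_mul fun s s' =>
      (abs_limitingMap_sub_limitingMap_le hc (abs_le.2 t.2)).trans
        (by gcongr; exacts [Real.le_coe_toNNReal _, (Subtype.dist_eq s s').ge])
  refine ⟨fun s => ContractingWith.fixedPoint (T s) (hT s),
    (ContractingWith.lipschitzWith_fixedPoint hT hTs).continuous, fun s t => ?_⟩
  rw [← limitingMap_eq_self_iff hc.ne']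
  refine ⟨fun h => (hT s).fixedPoint_unique (Subtype.ext h), fun h => ?_⟩
  subst h
  exact congrArg Subtype.val (hT s).fixedPoint_isFixedPt

theorem existsUnique_continuous_solution {X : Type*} [TopologicalSpace X] {p : X → ℝ}
    (hp : Continuous p) {M L : ℝ} (hc : 0 < c) (hR : 0 ≤ R) (hpP : ∀ x, |p x| ≤ P)
    (hM : ∀ t ∈ Icc (-R) R, |f t| ≤ M)
    (hL : ∀ t ∈ Icc (-R) R, ∀ t' ∈ Icc (-R) R, |f t - f t'| ≤ L * |t - t'|)
    (hPRM : (P * R + M) / c ≤ R) (hPL : (P + L) / c < 1) :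
    ∃! u : X → ℝ, Continuous u ∧ (∀ x, |u x| ≤ R) ∧ ∀ x, (p x + c) * u x = f (u x) := by
  obtain ⟨φ, hφ, hsol⟩ := exists_continuous_solution_Icc hc hR hM hL hPRM hPL
  let s (x : X) : Icc (-P) P := ⟨p x, abs_le.1 (hpP x)⟩
  refine ⟨fun x => φ (s x), ⟨continuous_subtype_val.comp (hφ.comp (hp.subtype_mk _)),
    fun x => abs_le.2 (φ (s x)).2, fun x => (hsol (s x) _).2 rfl⟩, ?_⟩
  rintro v ⟨-, hvR, hv⟩
  funext x
  exact congrArg Subtype.val ((hsol (s x) ⟨v x, abs_le.1 (hvR x)⟩).1 (hv x))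
end limitingMap

theorem limiting_equation_solvable_general (a R γ : ℝ) (ha : 0 < a) (hR : 0 < R)
    (hγ1 : γ < 1)
    (p : BoundedContinuousFunction (EuclideanSpace ℝ (Fin 3)) ℝ)
    (q : EuclideanSpace ℝ (Fin 3) → ℝ) (hq : ∀ x, q x = p x + a ^ 2)
    (f : ℝ → ℝ) (hf : ContDiff ℝ 1 f)
    (M : ℝ) (hM : M = sSup ((fun t => |f t|) '' Set.Icc (-R) R))
    (M₁ : ℝ) (hM₁ : M₁ = sSup ((fun t => |deriv f t|) '' Set.Icc (-(2 * R)) (2 * R)))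
    (hcond1 : (‖p‖ * R + M) / a ^ 2 ≤ R)
    (hcond2 : (‖p‖ + M₁) / a ^ 2 ≤ γ) :
    ∃! u : EuclideanSpace ℝ (Fin 3) → ℝ,
      Continuous u ∧ (∀ x, |u x| ≤ R) ∧ ∀ x, q x * u x = f (u x) := by
  have hfM (t) (ht : t ∈ Icc (-R) R) : |f t| ≤ M :=
    hM ▸ abs_le_sSup_image_abs isCompact_Icc hf.continuous.continuousOn ht
  have hIcc : Icc (-R) R ⊆ Icc (-(2 * R)) (2 * R) := Icc_subset_Icc (by linarith) (by linarith)
  have hfL (t) (ht : t ∈ Icc (-R) R) (t') (ht' : t' ∈ Icc (-R) R) :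
      |f t - f t'| ≤ M₁ * |t - t'| :=
    (convex_Icc (-R) R).norm_image_sub_le_of_norm_deriv_le
      (fun x _ => (hf.differentiable one_ne_zero).differentiableAt)
      (fun x hx => hM₁ ▸ abs_le_sSup_image_abs isCompact_Icc
        (hf.continuous_deriv le_rfl).continuousOn (hIcc hx)) ht' ht
  simpa only [hq] using existsUnique_continuous_solution p.continuous (by positivity) hR.le
    p.norm_coe_le_norm hfM hfL hcond1 (hcond2.trans_lt hγ1)

/-- Solvability of the limiting equation (1.3). Here the potential is
`q = p + a²` with `p` bounded, continuous and nonnegative (equivalently, `q` is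
continuous with `q ≥ a²` and `p = q - a²` bounded). Under the smallness
conditions there is a unique continuous `u` with `|u(x)| ≤ R` solving
`q(x)u(x) = f(u(x))` for all `x`. -/
theorem limiting_equation_solvable (a R γ : ℝ) (ha : 0 < a) (hR : 0 < R)
    (hγ0 : 0 < γ) (hγ1 : γ < 1)
    (p : BoundedContinuousFunction (EuclideanSpace ℝ (Fin 3)) ℝ) (hp : ∀ x, 0 ≤ p x)
    (q : EuclideanSpace ℝ (Fin 3) → ℝ) (hq : ∀ x, q x = p x + a ^ 2)
    (f : ℝ → ℝ) (hf : ContDiff ℝ 1 f)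
    (M : ℝ) (hM : M = sSup ((fun t => |f t|) '' Set.Icc (-R) R))
    (M₁ : ℝ) (hM₁ : M₁ = sSup ((fun t => |deriv f t|) '' Set.Icc (-(2 * R)) (2 * R)))
    (hcond1 : (‖p‖ * R + M) / a ^ 2 ≤ R)
    (hcond2 : (‖p‖ + M₁) / a ^ 2 ≤ γ) :
    ∃! u : EuclideanSpace ℝ (Fin 3) → ℝ,
      Continuous u ∧ (∀ x, |u x| ≤ R) ∧ ∀ x, q x * u x = f (u x) :=
  limiting_equation_solvable_general a R γ ha hR hγ1 p q hq f hf M hM M₁ hM₁ hcond1 hcond2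
end
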